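/- arXiv:1601.06655 — 9 statements merged into one kernel-verified Lean document; each statement's English description precedes it below -/
import Mathlib

section
/- Let 𝒯 be a class of R-modules and let ε : R → M be a 𝒯-envelope of the regular module R. Then every epimorphism α : N → M with N ∈ 𝒯 splits, i.e. there exists β : M → N with α ∘ β = id_M. -/
open CategoryTheory

universe u

theorem CategoryTheory.isSplitEpi_of_comp_eq_of_endo_isIso {C : Type*} [Category C]
    {X M N : C} {ε : X ⟶ M} (henv : ∀ γ : M ⟶ M, ε ≫ γ = ε → IsIso γ) {α : N ⟶ M}
    (g : M ⟶ N) (hg : ε ≫ g ≫ α = ε) : IsSplitEpi α :=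
  haveI := henv _ hg
  IsSplitEpi.mk' ⟨inv (g ≫ α) ≫ g, by simp⟩

theorem ModuleCat.exists_comp_eq_of_surjective {R : Type u} [Ring R] {P N M : ModuleCat.{u} R}
    [Module.Projective R P] {α : N ⟶ M} (hα : Function.Surjective α) (ε : P ⟶ M) :
    ∃ f : P ⟶ N, f ≫ α = ε := by
  obtain ⟨h, hh⟩ := Module.projective_lifting_property α.hom ε.hom hα
  exact ⟨ModuleCat.ofHom h, ModuleCat.hom_ext hh⟩

theorem envelope_epi_splits_general {R : Type u} [Ring R] (𝒯 : Set (ModuleCat.{u} R))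
    (M : ModuleCat.{u} R) (ε : ModuleCat.of R R ⟶ M)
    (hpre : ∀ T' ∈ 𝒯, ∀ f : ModuleCat.of R R ⟶ T', ∃ g : M ⟶ T', ε ≫ g = f)
    (henv : ∀ α : M ⟶ M, ε ≫ α = ε → IsIso α)
    (N : ModuleCat.{u} R) (hN : N ∈ 𝒯) (α : N ⟶ M) (hα : Function.Surjective α) :
    ∃ β : M ⟶ N, β ≫ α = 𝟙 M := by
  obtain ⟨f, hf⟩ := ModuleCat.exists_comp_eq_of_surjective hα ε
  obtain ⟨g, hg⟩ := hpre N hN f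
  have : IsSplitEpi α := isSplitEpi_of_comp_eq_of_endo_isIso henv g (by rw [reassoc_of% hg, hf])
  exact ⟨section_ α, IsSplitEpi.id α⟩

/-- If `ε : R → M` is a `𝒯`-envelope of the regular module `R`, then every epimorphism
`α : N → M` with `N ∈ 𝒯` splits. -/
theorem envelope_epi_splits {R : Type u} [Ring R] (𝒯 : Set (ModuleCat.{u} R))
    (M : ModuleCat.{u} R) (hM : M ∈ 𝒯) (ε : ModuleCat.of R R ⟶ M)
    (hpre : ∀ T' ∈ 𝒯, ∀ f : ModuleCat.of R R ⟶ T', ∃ g : M ⟶ T', ε ≫ g = f)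
    (henv : ∀ α : M ⟶ M, ε ≫ α = ε → IsIso α)
    (N : ModuleCat.{u} R) (hN : N ∈ 𝒯) (α : N ⟶ M) (hα : Function.Surjective α) :
    ∃ β : M ⟶ N, β ≫ α = 𝟙 M :=
  envelope_epi_splits_general 𝒯 M ε hpre henv N hN α hα
end

section
/- Let 𝒯 be a class of R-modules closed under extensions, and let ε : R → M be a 𝒯-envelope of R. Then Ext¹_R(M, T) = 0 for every T ∈ 𝒯. -/
/-!
Vanishing of `Ext¹(M, T)` means: for a projective resolution `P₁ → P₀ → M → 0`, every
`x : P₁ → T` killing the kernel of `d : P₁ → P₀` extends along `d`. The pushout of `d` and `x`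
is an extension `E` of `M` by `T`, hence lies in `𝒯`. Since `R` is projective, `ε` lifts through
`q : E → M` and the preenvelope property yields `g : M → E` with `ε ≫ g ≫ q = ε`; minimality of
the envelope makes `g ≫ q` invertible, so `q` splits and a retraction `E → T` extends `x`.
-/

open CategoryTheory Limits Opposite

universe u

namespace LinearMap

variable {R : Type*} [Ring R] {N P T M : Type*} [AddCommGroup N] [AddCommGroup P]
  [AddCommGroup T] [AddCommGroup M] [Module R N] [Module R P] [Module R T] [Module R M]
  (d : N →ₗ[R] P) (x : N →ₗ[R] T)

abbrev Pushout : Type _ := (P × T) ⧸ range (d.prod (-x))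

def pushoutInl : P →ₗ[R] Pushout d x := (range (d.prod (-x))).mkQ ∘ₗ inl R P T

def pushoutInr : T →ₗ[R] Pushout d x := (range (d.prod (-x))).mkQ ∘ₗ inr R P T

theorem pushoutInl_comp : pushoutInl d x ∘ₗ d = pushoutInr d x ∘ₗ x := by
  ext n
  simp only [pushoutInl, pushoutInr, comp_apply, Submodule.mkQ_apply, Submodule.Quotient.eq]
  exact ⟨n, by simp⟩

theorem pushoutInr_injective (h : ker d ≤ ker x) : Function.Injective (pushoutInr d x) := by
  rw [← ker_eq_bot, ker_eq_bot']
  intro t ht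
  obtain ⟨n, hn⟩ := (Submodule.Quotient.mk_eq_zero _).1 ht
  have hdn : d n = 0 := congr($hn.1)
  have hxn : -x n = t := congr($hn.2)
  rw [← hxn, h hdn, neg_zero]

def pushoutDesc (p : P →ₗ[R] M) (hdp : p ∘ₗ d = 0) : Pushout d x →ₗ[R] M :=
  (range (d.prod (-x))).liftQ (p ∘ₗ fst R P T) <| by
    rintro _ ⟨n, rfl⟩
    simpa using congr($hdp n)

theorem pushoutDesc_surjective {p : P →ₗ[R] M} (hdp : p ∘ₗ d = 0) (hp : Function.Surjective p) :
    Function.Surjective (pushoutDesc d x p hdp) := by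
  intro m
  obtain ⟨y, rfl⟩ := hp m
  exact ⟨pushoutInl d x y, rfl⟩

theorem exact_pushoutInr_pushoutDesc {p : P →ₗ[R] M} (hdp : Function.Exact d p) :
    Function.Exact (pushoutInr d x) (pushoutDesc d x p hdp.linearMap_comp_eq_zero) := by
  intro e
  refine ⟨fun he => ?_, ?_⟩
  · obtain ⟨⟨y, t⟩, rfl⟩ := Submodule.mkQ_surjective _ e
    obtain ⟨n, rfl⟩ := (hdp y).1 he
    refine ⟨t + x n, (Submodule.Quotient.eq _).2 ⟨-n, ?_⟩⟩
    simp
  · rintro ⟨t', rfl⟩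
    simp [pushoutInr, pushoutDesc]

theorem exists_comp_eq_of_exists_section_pushoutDesc (h : ker d ≤ ker x) {p : P →ₗ[R] M}
    (hdp : Function.Exact d p) (hp : Function.Surjective p)
    (hs : ∃ s, pushoutDesc d x p hdp.linearMap_comp_eq_zero ∘ₗ s = id) :
    ∃ g : P →ₗ[R] T, g ∘ₗ d = x := by
  obtain ⟨r, hr⟩ := ((exact_pushoutInr_pushoutDesc d x hdp).split_tfae
    (pushoutInr_injective d x h) (pushoutDesc_surjective d x _ hp)).out 0 1 |>.1 hs
  exact ⟨r ∘ₗ pushoutInl d x, by rw [comp_assoc, pushoutInl_comp, ← comp_assoc, hr, id_comp]⟩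

end LinearMap

namespace CategoryTheory

theorem exists_section_of_isEnvelope {C : Type*} [Category C] (𝒯 : Set C) {X M E : C}
    [Projective X] (ε : X ⟶ M) (hpre : ∀ T ∈ 𝒯, ∀ f : X ⟶ T, ∃ g : M ⟶ T, ε ≫ g = f)
    (henv : ∀ α : M ⟶ M, ε ≫ α = ε → IsIso α) (hE : E ∈ 𝒯) (q : E ⟶ M) [Epi q] :
    ∃ s : M ⟶ E, s ≫ q = 𝟙 M := by
  obtain ⟨g, hg⟩ := hpre E hE (Projective.factorThru ε q)
  have : IsIso (g ≫ q) := henv _ (by rw [← Category.assoc, hg, Projective.factorThru_comp])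
  exact ⟨inv (g ≫ q) ≫ g, by simp⟩

theorem isZero_Ext_one_of_forall_exists_comp_eq {C : Type*} [Category C] [Abelian C]
    [EnoughProjectives C] {X : C} (P : ProjectiveResolution X) (Y : C)
    (h : ∀ x : P.complex.X 1 ⟶ Y, P.complex.d 2 1 ≫ x = 0 → ∃ g, P.complex.d 1 0 ≫ g = x) :
    IsZero (((Ext ℤ C 1).obj (op X)).obj Y) := by
  refine IsZero.of_iso ?_ (P.isoExt 1 Y)
  rw [← HomologicalComplex.exactAt_iff_isZero_homology,
    HomologicalComplex.exactAt_iff' _ 0 1 2 (by simp) (by simp),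
    ShortComplex.moduleCat_exact_iff]
  exact h

end CategoryTheory

theorem ModuleCat.exists_comp_eq_of_isEnvelope {R : Type u} [Ring R]
    (𝒯 : Set (ModuleCat.{u} R))
    (hext : ∀ (A B C : ModuleCat.{u} R) (ι : A ⟶ B) (π : B ⟶ C),
      A ∈ 𝒯 → C ∈ 𝒯 → Function.Injective ι → Function.Surjective π →
      Function.Exact ι π → B ∈ 𝒯)
    {X M : ModuleCat.{u} R} [Projective X] (hM : M ∈ 𝒯) (ε : X ⟶ M)
    (hpre : ∀ T ∈ 𝒯, ∀ f : X ⟶ T, ∃ g : M ⟶ T, ε ≫ g = f)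
    (henv : ∀ α : M ⟶ M, ε ≫ α = ε → IsIso α)
    {N P T : ModuleCat.{u} R} (hT : T ∈ 𝒯) (d : N ⟶ P) (p : P ⟶ M)
    (hdp : Function.Exact d.hom p.hom) (hp : Function.Surjective p.hom) (x : N ⟶ T)
    (hx : LinearMap.ker d.hom ≤ LinearMap.ker x.hom) :
    ∃ g : P ⟶ T, d ≫ g = x := by
  let q : ModuleCat.of R (d.hom.Pushout x.hom) ⟶ M :=
    ModuleCat.ofHom (d.hom.pushoutDesc x.hom p.hom hdp.linearMap_comp_eq_zero)
  have hq : Function.Surjective q :=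
    LinearMap.pushoutDesc_surjective _ _ hdp.linearMap_comp_eq_zero hp
  have hE : ModuleCat.of R (d.hom.Pushout x.hom) ∈ 𝒯 :=
    hext _ _ _ (ModuleCat.ofHom (d.hom.pushoutInr x.hom)) q hT hM
      (LinearMap.pushoutInr_injective _ _ hx) hq (LinearMap.exact_pushoutInr_pushoutDesc _ _ hdp)
  have : Epi q := (ModuleCat.epi_iff_surjective q).2 hq
  obtain ⟨s, hs⟩ := exists_section_of_isEnvelope 𝒯 ε hpre henv hE q
  obtain ⟨g, hg⟩ := LinearMap.exists_comp_eq_of_exists_section_pushoutDesc d.hom x.hom hx hdp hp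
    ⟨s.hom, congr(($hs).hom)⟩
  exact ⟨ModuleCat.ofHom g, ModuleCat.hom_ext hg⟩

/-- If `𝒯` is a class of modules closed under extensions and `ε : R → M` is a
`𝒯`-envelope of the regular module `R`, then `Ext¹(M, T) = 0` for all `T ∈ 𝒯`. -/
theorem envelope_ext_vanish {R : Type u} [Ring R] (𝒯 : Set (ModuleCat.{u} R))
    (hext : ∀ (A B C : ModuleCat.{u} R) (ι : A ⟶ B) (π : B ⟶ C),
      A ∈ 𝒯 → C ∈ 𝒯 → Function.Injective ι → Function.Surjective π →
      Function.Exact ι π → B ∈ 𝒯)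
    (M : ModuleCat.{u} R) (hM : M ∈ 𝒯) (ε : ModuleCat.of R R ⟶ M)
    (hpre : ∀ T' ∈ 𝒯, ∀ f : ModuleCat.of R R ⟶ T', ∃ g : M ⟶ T', ε ≫ g = f)
    (henv : ∀ α : M ⟶ M, ε ≫ α = ε → IsIso α) :
    ∀ T ∈ 𝒯, Subsingleton (((Ext ℤ (ModuleCat.{u} R) 1).obj (op M)).obj T) := by
  intro T hT
  let P := projectiveResolution M
  refine ModuleCat.subsingleton_of_isZero (isZero_Ext_one_of_forall_exists_comp_eq P T ?_)
  intro x hx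
  have hker : LinearMap.ker (P.complex.d 1 0).hom ≤ LinearMap.ker x.hom := by
    rw [← (P.exact_succ 0).moduleCat_range_eq_ker]
    exact LinearMap.range_le_ker_iff.2 congr(($hx).hom)
  have hexact : Function.Exact (P.complex.d 1 0) (P.π.f 0) :=
    (ShortComplex.ShortExact.moduleCat_exact_iff_function_exact _).1 P.exact₀
  have hsurj : Function.Surjective (P.π.f 0) := (ModuleCat.epi_iff_surjective _).1 inferInstance
  exact ModuleCat.exists_comp_eq_of_isEnvelope 𝒯 hext hM ε hpre henv hT _ _ hexact hsurj x hker
end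

section
/- Let ℱ be a class of R-modules, E an injective R-module, and ε : M → E an ℱ-cover of E. Then every monomorphism α : M → N with N ∈ ℱ splits, i.e. there exists β : N → M with β ∘ α = id_M. -/
open CategoryTheory

universe u

theorem CategoryTheory.isSplitMono_of_cover {C : Type*} [Category C] {M N E : C} [Injective E]
    (ε : M ⟶ E) (hlift : ∀ f : N ⟶ E, ∃ g : N ⟶ M, g ≫ ε = f)
    (hcov : ∀ α : M ⟶ M, α ≫ ε = ε → IsIso α) (α : M ⟶ N) [Mono α] : IsSplitMono α := by
  obtain ⟨g, hg⟩ := hlift (Injective.factorThru ε α)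
  have hαg : (α ≫ g) ≫ ε = ε := by rw [Category.assoc, hg, Injective.comp_factorThru]
  have := hcov (α ≫ g) hαg
  exact IsSplitMono.mk' ⟨g ≫ inv (α ≫ g), by rw [← Category.assoc, IsIso.hom_inv_id]⟩

theorem cover_mono_splits_general {R : Type u} [Ring R] (ℱ : Set (ModuleCat.{u} R))
    (E : ModuleCat.{u} R) (hE : Injective E)
    (M : ModuleCat.{u} R) (ε : M ⟶ E)
    (hpre : ∀ F' ∈ ℱ, ∀ f : F' ⟶ E, ∃ g : F' ⟶ M, g ≫ ε = f)
    (hcov : ∀ α : M ⟶ M, α ≫ ε = ε → IsIso α)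
    (N : ModuleCat.{u} R) (hN : N ∈ ℱ) (α : M ⟶ N) (hα : Function.Injective α) :
    ∃ β : N ⟶ M, α ≫ β = 𝟙 M := by
  have : Mono α := (ModuleCat.mono_iff_injective α).mpr hα
  have := isSplitMono_of_cover ε (hpre N hN) hcov α
  exact ⟨retraction α, IsSplitMono.id α⟩

/-- If `ε : M → E` is an `ℱ`-cover of an injective module `E`, then every monomorphism
`α : M → N` with `N ∈ ℱ` splits. -/
theorem cover_mono_splits {R : Type u} [Ring R] (ℱ : Set (ModuleCat.{u} R))
    (E : ModuleCat.{u} R) (hE : Injective E)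
    (M : ModuleCat.{u} R) (hM : M ∈ ℱ) (ε : M ⟶ E)
    (hpre : ∀ F' ∈ ℱ, ∀ f : F' ⟶ E, ∃ g : F' ⟶ M, g ≫ ε = f)
    (hcov : ∀ α : M ⟶ M, α ≫ ε = ε → IsIso α)
    (N : ModuleCat.{u} R) (hN : N ∈ ℱ) (α : M ⟶ N) (hα : Function.Injective α) :
    ∃ β : N ⟶ M, α ≫ β = 𝟙 M :=
  cover_mono_splits_general ℱ E hE M ε hpre hcov N hN α hα
end

section
/- Consider a commutative diagram of R-modules with exact rows 0 → V →^ι L₋₁ →^ρ L₀ → T₁ → 0 and 0 → U →^υ X →^ξ T₀ → T₁ → 0, with vertical maps α : V → U, δ : L₋₁ → X, a map L₀ → T₀, and the identity on T₁. If the middle square (formed by ρ, δ, and the maps L₀ → T₀, ξ) is a pushout square, then α is an epimorphism. -/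
open CategoryTheory

universe u

/-!
In a pushout square of modules the map between the kernels of the parallel sides is surjective,
so `υ u ∈ ker ξ` lifts along `δ` to `ker ρ = range ι`; commutativity of the left square and
injectivity of `υ` then put `u` in the range of `α`.
-/

namespace ModuleCat

open Limits

lemma ker_le_map_ker_of_isPushout {R : Type u} [Ring R] {X₁ X₂ X₃ X₄ : ModuleCat.{u} R}
    {t : X₁ ⟶ X₂} {l : X₁ ⟶ X₃} {r : X₂ ⟶ X₄} {b : X₃ ⟶ X₄} (sq : IsPushout t l r b) :
    LinearMap.ker b.hom ≤ (LinearMap.ker t.hom).map l.hom := by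
  intro x hx
  obtain ⟨y, hy⟩ := (epi_iff_surjective _).mp (Abelian.epi_kernel_map_of_isPushout sq)
    ((kernelIsoKer b).inv ⟨x, hx⟩)
  refine ⟨kernel.ι t y, by simp, ?_⟩
  have h := congrArg (kernel.ι b) hy
  rwa [← ConcreteCategory.comp_apply, ← ConcreteCategory.comp_apply, kernelIsoKer_inv_kernel_ι,
    kernel.lift_ι] at h

end ModuleCat

theorem pushout_middle_square_imp_epi_general {R : Type u} [Ring R]
    {V L₁ L₀ U X T₀ : ModuleCat.{u} R}
    (ι : V ⟶ L₁) (ρ : L₁ ⟶ L₀)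
    (υ : U ⟶ X) (ξ : X ⟶ T₀)
    (α : V ⟶ U) (δ : L₁ ⟶ X) (γ : L₀ ⟶ T₀)
    (hιρ : Function.Exact ι ρ)
    (hυ : Function.Injective υ) (hυξ : Function.Exact υ ξ)
    (hsq₁ : ι ≫ δ = α ≫ υ)
    (hpo : IsPushout ρ δ γ ξ) :
    Function.Surjective α := by
  intro u
  obtain ⟨l, hl, hδl⟩ := ModuleCat.ker_le_map_ker_of_isPushout hpo ((hυξ (υ u)).mpr ⟨u, rfl⟩)
  obtain ⟨v, rfl⟩ := (hιρ l).mp hl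
  refine ⟨v, hυ ?_⟩
  rw [← hδl, ← ConcreteCategory.comp_apply, ← ConcreteCategory.comp_apply, hsq₁]

/-- Given a commutative diagram of modules with exact rows
`0 → V → L₋₁ → L₀ → T₁ → 0` and `0 → U → X → T₀ → T₁ → 0`
(vertical maps `α : V → U`, `δ : L₋₁ → X`, `γ : L₀ → T₀`, identity on `T₁`),
if the middle square is a pushout then `α` is an epimorphism. -/
theorem pushout_middle_square_imp_epi {R : Type u} [Ring R]
    {V L₁ L₀ T₁ U X T₀ : ModuleCat.{u} R}
    (ι : V ⟶ L₁) (ρ : L₁ ⟶ L₀) (π₁ : L₀ ⟶ T₁)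
    (υ : U ⟶ X) (ξ : X ⟶ T₀) (π₂ : T₀ ⟶ T₁)
    (α : V ⟶ U) (δ : L₁ ⟶ X) (γ : L₀ ⟶ T₀)
    (hι : Function.Injective ι) (hιρ : Function.Exact ι ρ)
    (hρπ : Function.Exact ρ π₁) (hπ₁ : Function.Surjective π₁)
    (hυ : Function.Injective υ) (hυξ : Function.Exact υ ξ)
    (hξπ : Function.Exact ξ π₂) (hπ₂ : Function.Surjective π₂)
    (hsq₁ : ι ≫ δ = α ≫ υ) (hsq₂ : ρ ≫ γ = δ ≫ ξ) (hsq₃ : γ ≫ π₂ = π₁)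
    (hpo : IsPushout ρ δ γ ξ) :
    Function.Surjective α :=
  pushout_middle_square_imp_epi_general ι ρ υ ξ α δ γ hιρ hυ hυξ hsq₁ hpo
end

section
/- Consider a commutative diagram of R-modules with exact rows 0 → V →^ι L₋₁ →^ρ L₀ → T₁ → 0 and 0 → U →^υ X →^ξ T₀ → T₁ → 0, with vertical maps α : V → U, δ : L₋₁ → X, γ : L₀ → T₀, and the identity on T₁. If α is an epimorphism, then the middle square (with maps ρ, δ, γ, ξ) is a pushout square. -/
open CategoryTheory Limits

universe u v

/-!
A commutative square in `ModuleCat R` is a pushout as soon as `L₁ → L₀ × X → T₀ → 0`, with maps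
`m ↦ (ρ m, -δ m)` and `(l, x) ↦ γ l + ξ x`, is exact. Surjectivity onto `T₀` comes from the
surjectivity of `π₁` and exactness at `T₀`. If `γ l + ξ x = 0`, then `π₁ l = 0`, so `l = ρ m`;
then `x + δ m` lies in `ker ξ = im υ`, and since `α` is onto, `x + δ m = υ (α v) = δ (ι v)`.
Hence `m - ι v` maps to `(l, x)`.
-/

lemma CategoryTheory.CommSq.isPushout_of_exact_shortComplex {C : Type*} [Category C]
    [Preadditive C] [Balanced C] {X₁ X₂ X₃ X₄ : C} [HasBinaryBiproduct X₂ X₃]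
    {t : X₁ ⟶ X₂} {l : X₁ ⟶ X₃} {r : X₂ ⟶ X₄} {b : X₃ ⟶ X₄}
    (sq : CommSq t l r b) (hex : sq.shortComplex.Exact) [Epi sq.shortComplex.g] :
    IsPushout t l r b :=
  .of_isColimit (sq.isColimitEquivIsColimitCokernelCofork.symm hex.gIsCokernel)

namespace ModuleCat

variable {R : Type u} [Ring R] {X₁ X₂ X₃ X₄ : ModuleCat.{v} R}

lemma hom_biprod_lift (t : X₁ ⟶ X₂) (l : X₁ ⟶ X₃) :
    (biprod.lift t l).hom =
      (biprodIsoProd X₂ X₃).toLinearEquiv.symm.toLinearMap ∘ₗ t.hom.prod l.hom := by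
  suffices biprod.lift t l = ofHom (t.hom.prod l.hom) ≫ (biprodIsoProd X₂ X₃).inv by
    rw [this]; rfl
  apply biprod.hom_ext <;> simp <;> rfl

lemma hom_biprod_desc (r : X₂ ⟶ X₄) (b : X₃ ⟶ X₄) :
    (biprod.desc r b).hom =
      r.hom.coprod b.hom ∘ₗ (biprodIsoProd X₂ X₃).toLinearEquiv.toLinearMap := by
  suffices biprod.desc r b = (biprodIsoProd X₂ X₃).hom ≫ ofHom (r.hom.coprod b.hom) by
    rw [this]; rfl
  rw [← Iso.inv_comp_eq, biprod.desc_eq, Preadditive.comp_add, ← Category.assoc,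
    ← Category.assoc, biprodIsoProd_inv_comp_fst, biprodIsoProd_inv_comp_snd]
  ext <;> simp

theorem isPushout_of_exact_prod_neg_coprod {t : X₁ ⟶ X₂} {l : X₁ ⟶ X₃} {r : X₂ ⟶ X₄}
    {b : X₃ ⟶ X₄} (sq : CommSq t l r b)
    (hex : Function.Exact (t.hom.prod (-l.hom)) (r.hom.coprod b.hom))
    (hsurj : Function.Surjective (r.hom.coprod b.hom)) : IsPushout t l r b := by
  have : Epi sq.shortComplex.g := by
    rw [epi_iff_surjective]
    change Function.Surjective (biprod.desc r b).hom
    rw [hom_biprod_desc, LinearMap.coe_comp]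
    exact hsurj.comp (biprodIsoProd X₂ X₃).toLinearEquiv.surjective
  refine sq.isPushout_of_exact_shortComplex ?_
  rw [ShortComplex.moduleCat_exact_iff_range_eq_ker, eq_comm, ← LinearMap.exact_iff]
  change Function.Exact (biprod.lift t (-l)).hom (biprod.desc r b).hom
  rw [hom_biprod_lift, hom_biprod_desc, LinearEquiv.conj_symm_exact_iff_exact]
  exact hex

end ModuleCat

namespace LinearMap

variable {R : Type*} [Ring R] {V L₁ L₀ T₁ U X T₀ : Type*}
  [AddCommGroup V] [AddCommGroup L₁] [AddCommGroup L₀] [AddCommGroup T₁]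
  [AddCommGroup U] [AddCommGroup X] [AddCommGroup T₀]
  [Module R V] [Module R L₁] [Module R L₀] [Module R T₁] [Module R U] [Module R X] [Module R T₀]

theorem coprod_surjective_of_exact {γ : L₀ →ₗ[R] T₀} {ξ : X →ₗ[R] T₀} {π₁ : L₀ →ₗ[R] T₁}
    {π₂ : T₀ →ₗ[R] T₁} (hξπ : Function.Exact ξ π₂) (hπ₁ : Function.Surjective π₁)
    (hsq : π₂ ∘ₗ γ = π₁) : Function.Surjective (γ.coprod ξ) := by
  intro t
  obtain ⟨l, hl⟩ := hπ₁ (π₂ t)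
  obtain ⟨x, hx⟩ := (hξπ (t - γ l)).mp (by rw [map_sub, ← comp_apply, hsq, hl, sub_self])
  exact ⟨(l, x), by simp [hx]⟩

theorem exact_prod_neg_coprod_of_ladder {ι : V →ₗ[R] L₁} {ρ : L₁ →ₗ[R] L₀} {π₁ : L₀ →ₗ[R] T₁}
    {υ : U →ₗ[R] X} {ξ : X →ₗ[R] T₀} {π₂ : T₀ →ₗ[R] T₁}
    {α : V →ₗ[R] U} {δ : L₁ →ₗ[R] X} {γ : L₀ →ₗ[R] T₀}
    (hιρ : ρ ∘ₗ ι = 0) (hρπ : Function.Exact ρ π₁) (hυξ : Function.Exact υ ξ)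
    (hξπ : π₂ ∘ₗ ξ = 0) (hsq₁ : δ ∘ₗ ι = υ ∘ₗ α) (hsq₂ : γ ∘ₗ ρ = ξ ∘ₗ δ)
    (hsq₃ : π₂ ∘ₗ γ = π₁) (hα : Function.Surjective α) :
    Function.Exact (ρ.prod (-δ)) (γ.coprod ξ) := by
  rintro ⟨l, x⟩
  simp only [coprod_apply, Set.mem_range, prod_apply, Function.prod_apply, LinearMap.neg_apply,
    Prod.ext_iff]
  constructor
  · intro h
    have hπl : π₁ l = 0 := by
      rw [← hsq₃, comp_apply, eq_neg_of_add_eq_zero_left h, map_neg, ← comp_apply, hξπ,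
        zero_apply, neg_zero]
    obtain ⟨m, rfl⟩ := (hρπ l).mp hπl
    obtain ⟨u, hu⟩ := (hυξ (x + δ m)).mp (by
      rw [map_add, ← comp_apply ξ, ← hsq₂, comp_apply, add_comm, h])
    obtain ⟨v, rfl⟩ := hα u
    refine ⟨m - ι v, ?_, ?_⟩
    · rw [map_sub, ← comp_apply ρ, hιρ, zero_apply, sub_zero]
    · rw [map_sub, ← comp_apply δ, hsq₁, comp_apply, hu]
      abel
  · rintro ⟨m, rfl, rfl⟩
    rw [map_neg, ← comp_apply ξ, ← hsq₂, comp_apply, add_neg_cancel]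

end LinearMap

theorem epi_imp_pushout_middle_square_general {R : Type u} [Ring R]
    {V L₁ L₀ T₁ U X T₀ : ModuleCat.{u} R}
    (ι : V ⟶ L₁) (ρ : L₁ ⟶ L₀) (π₁ : L₀ ⟶ T₁)
    (υ : U ⟶ X) (ξ : X ⟶ T₀) (π₂ : T₀ ⟶ T₁)
    (α : V ⟶ U) (δ : L₁ ⟶ X) (γ : L₀ ⟶ T₀)
    (hιρ : Function.Exact ι ρ) (hρπ : Function.Exact ρ π₁) (hπ₁ : Function.Surjective π₁)
    (hυξ : Function.Exact υ ξ) (hξπ : Function.Exact ξ π₂)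
    (hsq₁ : ι ≫ δ = α ≫ υ) (hsq₂ : ρ ≫ γ = δ ≫ ξ) (hsq₃ : γ ≫ π₂ = π₁)
    (hα : Function.Surjective α) :
    IsPushout ρ δ γ ξ := by
  refine ModuleCat.isPushout_of_exact_prod_neg_coprod ⟨hsq₂⟩ ?_ ?_
  · exact LinearMap.exact_prod_neg_coprod_of_ladder hιρ.linearMap_comp_eq_zero hρπ hυξ
      hξπ.linearMap_comp_eq_zero (congrArg ModuleCat.Hom.hom hsq₁)
      (congrArg ModuleCat.Hom.hom hsq₂) (congrArg ModuleCat.Hom.hom hsq₃) hα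
  · exact LinearMap.coprod_surjective_of_exact hξπ hπ₁ (congrArg ModuleCat.Hom.hom hsq₃)

/-- Given a commutative diagram of modules with exact rows
`0 → V → L₋₁ → L₀ → T₁ → 0` and `0 → U → X → T₀ → T₁ → 0`
(vertical maps `α : V → U`, `δ : L₋₁ → X`, `γ : L₀ → T₀`, identity on `T₁`),
if `α` is an epimorphism then the middle square is a pushout. -/
theorem epi_imp_pushout_middle_square {R : Type u} [Ring R]
    {V L₁ L₀ T₁ U X T₀ : ModuleCat.{u} R}
    (ι : V ⟶ L₁) (ρ : L₁ ⟶ L₀) (π₁ : L₀ ⟶ T₁)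
    (υ : U ⟶ X) (ξ : X ⟶ T₀) (π₂ : T₀ ⟶ T₁)
    (α : V ⟶ U) (δ : L₁ ⟶ X) (γ : L₀ ⟶ T₀)
    (hι : Function.Injective ι) (hιρ : Function.Exact ι ρ)
    (hρπ : Function.Exact ρ π₁) (hπ₁ : Function.Surjective π₁)
    (hυ : Function.Injective υ) (hυξ : Function.Exact υ ξ)
    (hξπ : Function.Exact ξ π₂) (hπ₂ : Function.Surjective π₂)
    (hsq₁ : ι ≫ δ = α ≫ υ) (hsq₂ : ρ ≫ γ = δ ≫ ξ) (hsq₃ : γ ≫ π₂ = π₁)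
    (hα : Function.Surjective α) :
    IsPushout ρ δ γ ξ :=
  epi_imp_pushout_middle_square_general ι ρ π₁ υ ξ π₂ α δ γ hιρ hρπ hπ₁ hυξ hξπ hsq₁ hsq₂ hsq₃ hα
end

section
/- Let R be a semiperfect ring whose Jacobson radical J is idempotent (J² = J). Then every extension of a semisimple right R-module by a semisimple right R-module is semisimple; consequently the class of semisimple right R-modules is closed under extensions. -/
universe u

/-! If `J = J • J`, then `J` kills any extension `B` of `A` by `C` as soon as it kills `A` and `C`:
for `s, n ∈ J` and `b ∈ B`, `n • b` maps to `0` in `C`, so it comes from `A` and is killed by `s`.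
The Jacobson radical kills every semisimple module, so when `J² = J` it kills `B`;
and every module killed by `J` is a module over the semisimple ring `R ⧸ J`, hence semisimple. -/

theorem Function.Exact.annihilator_smul_annihilator_le {R A B C : Type*} [Ring R]
    [AddCommGroup A] [Module R A] [AddCommGroup B] [Module R B] [AddCommGroup C] [Module R C]
    {ι : A →ₗ[R] B} {π : B →ₗ[R] C} (hexact : Function.Exact ι π) :
    Module.annihilator R A • (Module.annihilator R C : Submodule R R) ≤
      Module.annihilator R B := by
  refine Submodule.smul_le.mpr fun s hs n hn => Module.mem_annihilator.mpr fun b => ?_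
  obtain ⟨a, ha⟩ := (hexact (n • b)).mp (by rw [map_smul, Module.mem_annihilator.mp hn])
  rw [smul_eq_mul, mul_smul, ← ha, ← map_smul, Module.mem_annihilator.mp hs, map_zero]

theorem isSemisimpleModule_quotient_iff_isSemisimpleRing {R : Type*} [Ring R] (I : Ideal R)
    [I.IsTwoSided] : IsSemisimpleModule R (R ⧸ I) ↔ IsSemisimpleRing (R ⧸ I) :=
  let quotId : (R ⧸ I) →ₛₗ[Ideal.Quotient.mk I] R ⧸ I :=
    { toFun := id, map_add' := fun _ _ ↦ rfl, map_smul' := fun _ x ↦ x.inductionOn' fun _ ↦ rfl }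
  quotId.isSemisimpleModule_iff_of_bijective Function.bijective_id

theorem IsSemisimpleModule.of_le_annihilator {R M : Type*} [Ring R] [AddCommGroup M]
    [Module R M] {I : Ideal R} [I.IsTwoSided] (hquot : IsSemisimpleModule R (R ⧸ I))
    (hI : I ≤ Module.annihilator R M) : IsSemisimpleModule R M := by
  have : IsSemisimpleRing (R ⧸ I) := (isSemisimpleModule_quotient_iff_isSemisimpleRing I).mp hquot
  have hM : Module.IsTorsionBySet R M I := by
    rwa [Module.isTorsionBySet_iff_subset_annihilator]
  let := hM.module
  exact hM.isSemisimpleModule_iff.mp inferInstance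

theorem semisimple_closed_under_extensions_of_semiperfect_idem_jacobson_general
    {R : Type u} [Ring R]
    (hss : IsSemisimpleModule R (R ⧸ (Ideal.jacobson (⊥ : Ideal R))))
    (hidem : (Ideal.jacobson (⊥ : Ideal R)) •
        ((Ideal.jacobson (⊥ : Ideal R)) : Submodule R R) =
      ((Ideal.jacobson (⊥ : Ideal R)) : Submodule R R)) :
    ∀ (A B C : Type u) [AddCommGroup A] [Module R A] [AddCommGroup B] [Module R B]
      [AddCommGroup C] [Module R C] (ι : A →ₗ[R] B) (π : B →ₗ[R] C),
      Function.Injective ι → Function.Surjective π → Function.Exact ι π →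
      IsSemisimpleModule R A → IsSemisimpleModule R C → IsSemisimpleModule R B := by
  intro A B C _ _ _ _ _ _ ι π _ _ hexact _ _
  rw [Ideal.jacobson_bot] at hss hidem
  have hJ : Ring.jacobson R ≤ Module.annihilator R B :=
    calc Ring.jacobson R = Ring.jacobson R • (Ring.jacobson R : Submodule R R) := hidem.symm
      _ ≤ Module.annihilator R A • (Module.annihilator R C : Submodule R R) :=
        Submodule.smul_mono (IsSemisimpleModule.jacobson_le_annihilator R A)
          (IsSemisimpleModule.jacobson_le_annihilator R C)
      _ ≤ Module.annihilator R B := hexact.annihilator_smul_annihilator_le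
  exact hss.of_le_annihilator hJ

/-- Let `R` be a semiperfect ring (i.e. `R/J` is semisimple and idempotents lift
modulo `J`, where `J` is the Jacobson radical) whose Jacobson radical is idempotent
(`J² = J`).  Then every extension of a semisimple module by a semisimple module is
semisimple; in particular the class of semisimple `R`-modules is closed under
extensions. -/
theorem semisimple_closed_under_extensions_of_semiperfect_idem_jacobson
    {R : Type u} [Ring R]
    (hss : IsSemisimpleModule R (R ⧸ (Ideal.jacobson (⊥ : Ideal R))))
    (hlift : ∀ x : R, x * x - x ∈ Ideal.jacobson (⊥ : Ideal R) →
      ∃ e : R, e * e = e ∧ e - x ∈ Ideal.jacobson (⊥ : Ideal R))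
    (hidem : (Ideal.jacobson (⊥ : Ideal R)) •
        ((Ideal.jacobson (⊥ : Ideal R)) : Submodule R R) =
      ((Ideal.jacobson (⊥ : Ideal R)) : Submodule R R)) :
    ∀ (A B C : Type u) [AddCommGroup A] [Module R A] [AddCommGroup B] [Module R B]
      [AddCommGroup C] [Module R C] (ι : A →ₗ[R] B) (π : B →ₗ[R] C),
      Function.Injective ι → Function.Surjective π → Function.Exact ι π →
      IsSemisimpleModule R A → IsSemisimpleModule R C → IsSemisimpleModule R B :=
  semisimple_closed_under_extensions_of_semiperfect_idem_jacobson_general hss hidem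
end

section
/- Let R be a ring, 𝒯 a class of R-modules, X an R-module, and ε : X → T₀ a homomorphism with T₀ ∈ 𝒯 arising as a pushout: there is a commutative diagram with exact rows L₋₁ →^ρ L₀ → T₁ → 0 and X →^ε T₀ → T₁ → 0 where the left square is a pushout, and ρ is a homomorphism between projective modules such that Hom(ρ, T) is surjective for all T ∈ 𝒯. Then ε is a 𝒯-preenvelope of X. -/
open CategoryTheory

universe u

namespace CategoryTheory.IsPushout

theorem exists_comp_eq_of_forall_exists_comp_eq {C : Type*} [Category C]
    {A B X P T : C} {ρ : A ⟶ B} {δ : A ⟶ X} {δ₀ : B ⟶ P} {ε : X ⟶ P}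
    (hpo : IsPushout ρ δ δ₀ ε) (hρ : ∀ f : A ⟶ T, ∃ g : B ⟶ T, ρ ≫ g = f) (f : X ⟶ T) :
    ∃ g : P ⟶ T, ε ≫ g = f := by
  obtain ⟨g₀, hg₀⟩ := hρ (δ ≫ f)
  exact ⟨hpo.desc g₀ f hg₀, hpo.inr_desc g₀ f hg₀⟩

end CategoryTheory.IsPushout

theorem pushout_is_preenvelope_general {R : Type u} [Ring R] (𝒯 : Set (ModuleCat.{u} R))
    {X L₁ L₀ T₀ : ModuleCat.{u} R}
    (ρ : L₁ ⟶ L₀) (δ : L₁ ⟶ X) (ε : X ⟶ T₀) (δ₀ : L₀ ⟶ T₀)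
    (hρ : ∀ T ∈ 𝒯, ∀ f : L₁ ⟶ T, ∃ g : L₀ ⟶ T, ρ ≫ g = f)
    (hpo : IsPushout ρ δ δ₀ ε) :
    ∀ T' ∈ 𝒯, ∀ f : X ⟶ T', ∃ g : T₀ ⟶ T', ε ≫ g = f :=
  fun T' hT' => hpo.exists_comp_eq_of_forall_exists_comp_eq (hρ T' hT')

/-- If `ε : X → T₀` (with `T₀ ∈ 𝒯`) arises as a pushout of a map `ρ : L₋₁ → L₀`
between projective modules such that `Hom(ρ, T)` is surjective for all `T ∈ 𝒯`,
within a commutative diagram with exact rows `L₋₁ → L₀ → T₁ → 0` and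
`X → T₀ → T₁ → 0`, then `ε` is a `𝒯`-preenvelope of `X`. -/
theorem pushout_is_preenvelope {R : Type u} [Ring R] (𝒯 : Set (ModuleCat.{u} R))
    {X L₁ L₀ T₀ T₁ : ModuleCat.{u} R}
    (hL₁ : Projective L₁) (hL₀ : Projective L₀)
    (ρ : L₁ ⟶ L₀) (π₁ : L₀ ⟶ T₁) (δ : L₁ ⟶ X) (ε : X ⟶ T₀) (δ₀ : L₀ ⟶ T₀)
    (π₂ : T₀ ⟶ T₁)
    (hT₀ : T₀ ∈ 𝒯)
    (hρ : ∀ T ∈ 𝒯, ∀ f : L₁ ⟶ T, ∃ g : L₀ ⟶ T, ρ ≫ g = f)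
    (hrow₁ : Function.Exact ρ π₁) (hπ₁ : Function.Surjective π₁)
    (hrow₂ : Function.Exact ε π₂) (hπ₂ : Function.Surjective π₂)
    (hcomm : δ₀ ≫ π₂ = π₁)
    (hpo : IsPushout ρ δ δ₀ ε) :
    ∀ T' ∈ 𝒯, ∀ f : X ⟶ T', ∃ g : T₀ ⟶ T', ε ≫ g = f :=
  pushout_is_preenvelope_general 𝒯 ρ δ ε δ₀ hρ hpo
end

section
/- Let R be a right hereditary ring, 𝒯 a torsion class of right R-modules, and ε : R → M a 𝒯-preenvelope with U = Ker(ε). If Ext¹_R(R/U, T) = 0 for all T ∈ 𝒯, then Hom_R(U, T) = 0 for all T ∈ 𝒯. -/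
/-!
For a projective ideal `U`, the sequence `0 → U → R → R ⧸ U → 0` is a projective resolution of
`R ⧸ U`, so `Ext¹(R ⧸ U, T)` is the cokernel of restriction `Hom(R, T) → Hom(U, T)`. When it
vanishes, every `f : U → T` extends to `R`; for `T ∈ 𝒯` that extension factors through `ε`,
which kills `U`, hence `f = 0`.
-/

open CategoryTheory Opposite DirectSum

universe u

open Limits HomologicalComplex

section

variable {C : Type*} [Category* C] [Abelian C]

lemma HomologicalComplex.exactAt_double_succ_of_mono {X₁ X₀ : C} (f : X₁ ⟶ X₀) [Mono f]
    (n : ℕ) : (double f (ComplexShape.down_mk 1 0 rfl)).ExactAt (n + 1) := by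
  rw [exactAt_iff' _ (n + 2) (n + 1) n (by simp) (by simp)]
  obtain _ | n := n
  · rw [ShortComplex.exact_iff_mono _
      (double_d_eq_zero₀ f (ComplexShape.down_mk 1 0 rfl) _ _ (by simp))]
    change Mono ((double f (ComplexShape.down_mk 1 0 rfl)).d 1 0)
    rw [double_d _ _ one_ne_zero]
    infer_instance
  · exact ShortComplex.exact_of_isZero_X₂ _
      (isZero_double_X f (ComplexShape.down_mk 1 0 rfl) _ (by omega) (by omega))

theorem CategoryTheory.ProjectiveResolution.exists_d_comp_eq_of_subsingleton_ext {X : C}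
    (P : ProjectiveResolution X) (R : Type*) [Ring R] [Linear R C] [EnoughProjectives C] {Y : C}
    (hExt : Subsingleton (((Ext R C 1).obj (op X)).obj Y)) (φ : P.complex.X 1 ⟶ Y)
    (hφ : P.complex.d 2 1 ≫ φ = 0) : ∃ ψ : P.complex.X 0 ⟶ Y, P.complex.d 1 0 ≫ ψ = φ := by
  have hzero : IsZero ((P.complex.linearYonedaObj R Y).homology 1) :=
    IsZero.of_iso (ModuleCat.isZero_of_subsingleton _) (P.isoExt 1 Y).symm
  have hexact := (exactAt_iff_isZero_homology _ 1).mpr hzero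
  rw [exactAt_iff' _ 0 1 2 (by simp) (by simp), ShortComplex.moduleCat_exact_iff] at hexact
  exact hexact φ hφ

namespace CategoryTheory.ShortComplex.ShortExact

variable {S : ShortComplex C} [Projective S.X₁] [Projective S.X₂]

noncomputable def projectiveResolution (hS : S.ShortExact) : ProjectiveResolution S.X₃ where
  complex := double S.f (ComplexShape.down_mk 1 0 rfl)
  projective n := by
    obtain _ | _ | n := n
    · exact Projective.of_iso (doubleXIso₁ _ _ one_ne_zero).symm inferInstance
    · exact Projective.of_iso (doubleXIso₀ _ _).symm inferInstance
    · exact (isZero_double_X S.f (ComplexShape.down_mk 1 0 rfl) _ (by omega) (by omega)).projective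
  π := (ChainComplex.toSingle₀Equiv _ _).symm ⟨(doubleXIso₁ _ _ one_ne_zero).hom ≫ S.g, by
      simp [double_d _ _ one_ne_zero]⟩
  quasiIso := ⟨fun n => by
    cases n
    · rw [ChainComplex.quasiIsoAt₀_iff, ShortComplex.quasiIso_iff_of_zeros']
      · have comm : (doubleXIso₀ S.f (ComplexShape.down_mk 1 0 rfl)).hom ≫ S.f =
            (double S.f (ComplexShape.down_mk 1 0 rfl)).d 1 0 ≫
              (doubleXIso₁ S.f (ComplexShape.down_mk 1 0 rfl) one_ne_zero).hom := by
          simp [double_d _ _ one_ne_zero]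
        refine (ShortComplex.exact_and_epi_g_iff_of_iso ?_).2 ⟨hS.exact, hS.epi_g⟩
        exact ShortComplex.isoMk (doubleXIso₀ S.f (ComplexShape.down_mk 1 0 rfl))
          (doubleXIso₁ S.f (ComplexShape.down_mk 1 0 rfl) one_ne_zero) (Iso.refl _)
          comm (by
            simp only [shortComplexFunctor'_map_τ₂, ChainComplex.toSingle₀Equiv_symm_apply_f_zero,
              Iso.refl_hom]
            exact (Category.comp_id _).symm)
      · exact double_d_eq_zero₀ S.f (ComplexShape.down_mk 1 0 rfl) 0 0 (by simp)
      all_goals rfl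
    · have := hS.mono_f
      rw [quasiIsoAt_iff_exactAt']
      · exact exactAt_double_succ_of_mono S.f _
      · apply ChainComplex.exactAt_succ_single_obj⟩

theorem exists_comp_eq_of_subsingleton_ext (hS : S.ShortExact) (R : Type*) [Ring R]
    [Linear R C] [EnoughProjectives C] {Y : C}
    (hExt : Subsingleton (((Ext R C 1).obj (Opposite.op S.X₃)).obj Y))
    (f : S.X₁ ⟶ Y) : ∃ g : S.X₂ ⟶ Y, S.f ≫ g = f := by
  let rel : (ComplexShape.down ℕ).Rel 1 0 := rfl
  obtain ⟨g, hg⟩ : ∃ g : (double S.f rel).X 0 ⟶ Y,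
      (double S.f rel).d 1 0 ≫ g = (doubleXIso₀ S.f rel).hom ≫ f :=
    hS.projectiveResolution.exists_d_comp_eq_of_subsingleton_ext R hExt
      ((doubleXIso₀ S.f rel).hom ≫ f)
      (by rw [show hS.projectiveResolution.complex.d 2 1 = 0 from
        double_d_eq_zero₀ S.f rel _ _ (by simp), zero_comp])
  refine ⟨(doubleXIso₁ S.f rel one_ne_zero).inv ≫ g, ?_⟩
  rw [double_d _ _ one_ne_zero, Category.assoc, Category.assoc] at hg
  exact (cancel_epi _).1 hg

end CategoryTheory.ShortComplex.ShortExact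

end

namespace Submodule

variable {R : Type u} [Ring R] {P : Type u} [AddCommGroup P] [Module R P] (N : Submodule R P)

abbrev shortComplexQuotient : ShortComplex (ModuleCat.{u} R) :=
  ModuleCat.shortComplexOfCompEqZero N.subtype N.mkQ
    (LinearMap.exact_subtype_mkQ N).linearMap_comp_eq_zero

lemma shortExact_shortComplexQuotient : N.shortComplexQuotient.ShortExact :=
  ModuleCat.shortComplex_shortExact _ (LinearMap.exact_subtype_mkQ N) N.injective_subtype
    N.mkQ_surjective

end Submodule

theorem hom_ker_eq_zero_of_hereditary_general {R : Type u} [Ring R]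
    (hher : ∀ I : Ideal R, Module.Projective R I)
    (𝒯 : Set (ModuleCat.{u} R))
    (M : ModuleCat.{u} R) (ε : ModuleCat.of R R ⟶ M)
    (hpre : ∀ T ∈ 𝒯, ∀ f : ModuleCat.of R R ⟶ T, ∃ g : M ⟶ T, ε ≫ g = f)
    (hExt : ∀ T ∈ 𝒯,
      Subsingleton (((Ext ℤ (ModuleCat.{u} R) 1).obj
        (op (ModuleCat.of R (R ⧸ LinearMap.ker ε.hom)))).obj T)) :
    ∀ T ∈ 𝒯, ∀ f : ↥(LinearMap.ker ε.hom) →ₗ[R] ↥T, f = 0 := by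
  intro T hT f
  let U := LinearMap.ker ε.hom
  have := hher U
  obtain ⟨g, hg⟩ := U.shortExact_shortComplexQuotient.exists_comp_eq_of_subsingleton_ext ℤ
    (hExt T hT) (ModuleCat.ofHom f)
  obtain ⟨h, rfl⟩ := hpre T hT g
  have hεU : ModuleCat.ofHom U.subtype ≫ ε = 0 := by
    ext x
    exact x.2
  have hf : ModuleCat.ofHom f = 0 := by
    rw [← hg, ← Category.assoc, hεU, zero_comp]
  exact congrArg ModuleCat.Hom.hom hf

/-- Let `R` be a right hereditary ring (every ideal is projective), `𝒯` a torsion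
class (closed under epimorphic images, direct sums and extensions), and
`ε : R → M` a `𝒯`-preenvelope with kernel `U`.  If `Ext¹(R/U, T) = 0` for all
`T ∈ 𝒯`, then `Hom(U, T) = 0` for all `T ∈ 𝒯`. -/
theorem hom_ker_eq_zero_of_hereditary {R : Type u} [Ring R]
    (hher : ∀ I : Ideal R, Module.Projective R I)
    (𝒯 : Set (ModuleCat.{u} R))
    (hquot : ∀ (A B : ModuleCat.{u} R) (f : A ⟶ B),
      A ∈ 𝒯 → Function.Surjective f → B ∈ 𝒯)
    (hsums : ∀ (ι : Type u) (A : ι → ModuleCat.{u} R), (∀ i, A i ∈ 𝒯) →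
      ModuleCat.of R (⨁ i, ↥(A i)) ∈ 𝒯)
    (hext : ∀ (A B C : ModuleCat.{u} R) (ι : A ⟶ B) (π : B ⟶ C),
      A ∈ 𝒯 → C ∈ 𝒯 → Function.Injective ι → Function.Surjective π →
      Function.Exact ι π → B ∈ 𝒯)
    (M : ModuleCat.{u} R) (hM : M ∈ 𝒯) (ε : ModuleCat.of R R ⟶ M)
    (hpre : ∀ T ∈ 𝒯, ∀ f : ModuleCat.of R R ⟶ T, ∃ g : M ⟶ T, ε ≫ g = f)
    (hExt : ∀ T ∈ 𝒯,
      Subsingleton (((Ext ℤ (ModuleCat.{u} R) 1).obj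
        (op (ModuleCat.of R (R ⧸ LinearMap.ker ε.hom)))).obj T)) :
    ∀ T ∈ 𝒯, ∀ f : ↥(LinearMap.ker ε.hom) →ₗ[R] ↥T, f = 0 :=
  hom_ker_eq_zero_of_hereditary_general hher 𝒯 M ε hpre hExt
end

section
/- Let R be a ring, 𝒯 a class of R-modules closed under quotients, and ε : R → M a 𝒯-preenvelope with M ∈ 𝒯 and Ext¹_R(M, T) = 0 for all T ∈ 𝒯. Let K = Coker(ε). Then Ext¹_R(K, T) = 0 for all T ∈ 𝒯. -/
/-!
`Ext¹(X, T)` vanishes iff for a projective presentation `π : P ↠ X` every map `ker π → T`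
extends to `P`, and this does not depend on the presentation. Given `π : P ↠ K`, lift it to
`q : P → M`; then `[q, ε] : P × R ↠ M`, so a map `ker π → T` pulled back to `ker [q, ε]` extends to
some `G : P × R → T`. Factoring `G ∘ inr` through the preenvelope as `g ∘ ε`, the map
`G ∘ inl - g ∘ q` extends the original one.
-/

open CategoryTheory Opposite

universe u

def KerRestrictSurjective {R P X : Type*} [Ring R] [AddCommGroup P] [Module R P]
    [AddCommGroup X] [Module R X] (π : P →ₗ[R] X) (T : Type*) [AddCommGroup T] [Module R T] :
    Prop :=
  Function.Surjective fun g : P →ₗ[R] T => g ∘ₗ (LinearMap.ker π).subtype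

section LinearAlgebra

variable {R : Type*} [Ring R] {T : Type*} [AddCommGroup T] [Module R T]

theorem LinearMap.exists_comp_eq_of_ker_le {A B : Type*} [AddCommGroup A] [Module R A]
    [AddCommGroup B] [Module R B] {p : A →ₗ[R] B} (hp : Function.Surjective p)
    {φ : A →ₗ[R] T} (h : LinearMap.ker p ≤ LinearMap.ker φ) : ∃ f : B →ₗ[R] T, f ∘ₗ p = φ :=
  ⟨(LinearMap.ker p).liftQ φ h ∘ₗ (p.quotKerEquivOfSurjective hp).symm.toLinearMap, by
    ext x; simp [LinearMap.quotKerEquivOfSurjective_symm_apply]⟩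

theorem kerRestrictSurjective_iff {P₂ P₁ P₀ X : Type*} [AddCommGroup P₂] [Module R P₂]
    [AddCommGroup P₁] [Module R P₁] [AddCommGroup P₀] [Module R P₀] [AddCommGroup X] [Module R X]
    {d₂ : P₂ →ₗ[R] P₁} {d₁ : P₁ →ₗ[R] P₀} {π : P₀ →ₗ[R] X}
    (h₁ : LinearMap.range d₂ = LinearMap.ker d₁) (h₀ : LinearMap.range d₁ = LinearMap.ker π) :
    KerRestrictSurjective π T ↔ ∀ φ : P₁ →ₗ[R] T, φ ∘ₗ d₂ = 0 → ∃ ψ : P₀ →ₗ[R] T, ψ ∘ₗ d₁ = φ := by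
  have hmem (x : P₁) : d₁ x ∈ LinearMap.ker π := h₀ ▸ LinearMap.mem_range_self d₁ x
  set d₁' := d₁.codRestrict (LinearMap.ker π) hmem
  have hd₁' : Function.Surjective d₁' := by
    rintro ⟨y, hy⟩
    obtain ⟨x, rfl⟩ := h₀.ge hy
    exact ⟨x, rfl⟩
  have hcomp : (LinearMap.ker π).subtype ∘ₗ d₁' = d₁ := rfl
  constructor
  · intro h φ hφ
    have hker : LinearMap.ker d₁' ≤ LinearMap.ker φ := by
      rw [LinearMap.ker_codRestrict, ← h₁, LinearMap.range_le_ker_iff, hφ]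
    obtain ⟨f, rfl⟩ := LinearMap.exists_comp_eq_of_ker_le hd₁' hker
    obtain ⟨ψ, rfl⟩ := h f
    exact ⟨ψ, by rw [← hcomp, LinearMap.comp_assoc]⟩
  · intro H f
    have hzero : (f ∘ₗ d₁') ∘ₗ d₂ = 0 := by
      have : d₁' ∘ₗ d₂ = 0 := by
        ext x
        exact h₁.le (LinearMap.mem_range_self d₂ x)
      rw [LinearMap.comp_assoc, this, LinearMap.comp_zero]
    obtain ⟨ψ, hψ⟩ := H _ hzero
    exact ⟨ψ, (LinearMap.cancel_right hd₁').1 (by rw [LinearMap.comp_assoc, hcomp, hψ])⟩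

theorem KerRestrictSurjective.of_projective {P Q X : Type*} [AddCommGroup P] [Module R P]
    [AddCommGroup Q] [Module R Q] [AddCommGroup X] [Module R X]
    [Module.Projective R P] [Module.Projective R Q] {π : P →ₗ[R] X} {π' : Q →ₗ[R] X}
    (hπ : Function.Surjective π) (hπ' : Function.Surjective π') (h : KerRestrictSurjective π T) :
    KerRestrictSurjective π' T := by
  obtain ⟨α, hα⟩ := Module.projective_lifting_property π π' hπ
  obtain ⟨β, hβ⟩ := Module.projective_lifting_property π' π hπ'
  have hα_apply (x : Q) : π (α x) = π' x := LinearMap.congr_fun hα x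
  have hβ_apply (x : P) : π' (β x) = π x := LinearMap.congr_fun hβ x
  have hβ_mem (x : P) (hx : x ∈ LinearMap.ker π) : β x ∈ LinearMap.ker π' := by
    simpa [LinearMap.mem_ker, hβ_apply] using hx
  have hα_mem (x : Q) (hx : x ∈ LinearMap.ker π') : α x ∈ LinearMap.ker π := by
    simpa [LinearMap.mem_ker, hα_apply] using hx
  have hγ_mem (x : Q) : x - β (α x) ∈ LinearMap.ker π' := by
    simp [LinearMap.mem_ker, hα_apply, hβ_apply]
  intro f
  obtain ⟨G, hG⟩ := h (f ∘ₗ β.restrict hβ_mem)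
  -- split `x ∈ ker π'` as `β (α x) + (x - β (α x))`; `G ∘ α` takes care of the first summand
  refine ⟨G ∘ₗ α + f ∘ₗ (LinearMap.id - β ∘ₗ α).codRestrict _ hγ_mem, ?_⟩
  ext ⟨x, hx⟩
  have hGx : G (α x) = f ⟨β (α x), hβ_mem _ (hα_mem x hx)⟩ :=
    LinearMap.congr_fun hG ⟨α x, hα_mem x hx⟩
  calc G (α x) + f ⟨x - β (α x), hγ_mem x⟩
      = f ⟨β (α x), hβ_mem _ (hα_mem x hx)⟩ + f ⟨x - β (α x), hγ_mem x⟩ := by rw [hGx]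
    _ = f ⟨x, hx⟩ := by rw [← map_add]; congr 1; ext; simp

theorem KerRestrictSurjective.mkQ_comp_of_coprod {P N M : Type*} [AddCommGroup P] [Module R P]
    [AddCommGroup N] [Module R N] [AddCommGroup M] [Module R M] {q : P →ₗ[R] M} {ε : N →ₗ[R] M}
    (hε : ∀ f : N →ₗ[R] T, ∃ g : M →ₗ[R] T, g ∘ₗ ε = f)
    (h : KerRestrictSurjective (q.coprod ε) T) :
    KerRestrictSurjective ((LinearMap.range ε).mkQ ∘ₗ q) T := by
  have hfst (z : P × N) (hz : z ∈ LinearMap.ker (q.coprod ε)) :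
      z.1 ∈ LinearMap.ker ((LinearMap.range ε).mkQ ∘ₗ q) := by
    have hz : q z.1 = -ε z.2 := eq_neg_of_add_eq_zero_left hz
    simp [hz]
  intro f
  obtain ⟨G, hG⟩ := h (f ∘ₗ (LinearMap.fst R P N).restrict hfst)
  obtain ⟨g, hg⟩ := hε (G ∘ₗ LinearMap.inr R P N)
  refine ⟨G ∘ₗ LinearMap.inl R P N - g ∘ₗ q, ?_⟩
  ext ⟨x, hx⟩
  obtain ⟨a, ha⟩ : q x ∈ LinearMap.range ε := by simpa using hx
  have hmem : (x, -a) ∈ LinearMap.ker (q.coprod ε) := by simp [ha]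
  have hGx : G (x, -a) = f ⟨x, hx⟩ := LinearMap.congr_fun hG ⟨(x, -a), hmem⟩
  have hga : g (ε a) = G (0, a) := LinearMap.congr_fun hg a
  calc G (x, 0) - g (q x) = G (x, 0) - G (0, a) := by rw [← ha, hga]
    _ = G (x, -a) := by rw [← map_sub, Prod.mk_sub_mk, sub_zero, zero_sub]
    _ = f ⟨x, hx⟩ := hGx

theorem LinearMap.surjective_coprod_of_surjective_mkQ_comp {P N M : Type*} [AddCommGroup P]
    [Module R P] [AddCommGroup N] [Module R N] [AddCommGroup M] [Module R M] {q : P →ₗ[R] M}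
    {ε : N →ₗ[R] M} (h : Function.Surjective ((LinearMap.range ε).mkQ ∘ₗ q)) :
    Function.Surjective (q.coprod ε) := by
  rwa [← LinearMap.range_eq_top, LinearMap.range_coprod, sup_comm, ← Submodule.map_mkQ_eq_top,
    ← LinearMap.range_comp, LinearMap.range_eq_top]

end LinearAlgebra

section Ext

variable {R : Type u} [Ring R]

theorem subsingleton_ext_one_iff_of_projectiveResolution {X : ModuleCat.{u} R}
    (P : ProjectiveResolution X) (T : ModuleCat.{u} R) :
    Subsingleton (((Ext ℤ (ModuleCat.{u} R) 1).obj (op X)).obj T) ↔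
      KerRestrictSurjective (P.π.f 0).hom T := by
  rw [kerRestrictSurjective_iff (P.exact_succ 0).moduleCat_range_eq_ker
      P.exact₀.moduleCat_range_eq_ker,
    ← ModuleCat.isZero_iff_subsingleton, Iso.isZero_iff (P.isoExt 1 T),
    ← HomologicalComplex.exactAt_iff_isZero_homology,
    HomologicalComplex.exactAt_iff' _ 0 1 2 (by simp) (by simp), ShortComplex.moduleCat_exact_iff]
  exact ModuleCat.homEquiv.forall_congr fun _ => imp_congr ModuleCat.hom_ext_iff
    (ModuleCat.homEquiv.exists_congr fun _ => ModuleCat.hom_ext_iff)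

theorem subsingleton_ext_one_iff (X T : ModuleCat.{u} R) :
    Subsingleton (((Ext ℤ (ModuleCat.{u} R) 1).obj (op X)).obj T) ↔
      ∀ (P : Type u) [AddCommGroup P] [Module R P] [Module.Projective R P] (π : P →ₗ[R] X),
        Function.Surjective π → KerRestrictSurjective π T := by
  obtain ⟨PX⟩ := HasProjectiveResolution.out (Z := X)
  have hπ : Function.Surjective (PX.π.f 0).hom :=
    (ModuleCat.epi_iff_surjective (PX.π.f 0)).1 inferInstance
  rw [subsingleton_ext_one_iff_of_projectiveResolution PX]
  exact ⟨fun h _ _ _ _ _ hπ' => h.of_projective hπ hπ', fun h => h _ _ hπ⟩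

end Ext

theorem ext_coker_vanish_general {R : Type u} [Ring R] (𝒯 : Set (ModuleCat.{u} R))
    (M : ModuleCat.{u} R) (ε : ModuleCat.of R R ⟶ M)
    (hpre : ∀ T ∈ 𝒯, ∀ f : ModuleCat.of R R ⟶ T, ∃ g : M ⟶ T, ε ≫ g = f)
    (hExtM : ∀ T ∈ 𝒯,
      Subsingleton (((Ext ℤ (ModuleCat.{u} R) 1).obj (op M)).obj T)) :
    ∀ T ∈ 𝒯,
      Subsingleton (((Ext ℤ (ModuleCat.{u} R) 1).obj
        (op (ModuleCat.of R (↥M ⧸ LinearMap.range ε.hom)))).obj T) := by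
  intro T hT
  have hε (f : R →ₗ[R] T) : ∃ g : M →ₗ[R] T, g ∘ₗ ε.hom = f := by
    obtain ⟨g, hg⟩ := hpre T hT (ModuleCat.ofHom f)
    exact ⟨g.hom, congrArg ModuleCat.Hom.hom hg⟩
  rw [subsingleton_ext_one_iff]
  intro P _ _ _ π hπ
  obtain ⟨q, rfl⟩ := Module.projective_lifting_property (LinearMap.range ε.hom).mkQ π
    (Submodule.mkQ_surjective _)
  have hr := LinearMap.surjective_coprod_of_surjective_mkQ_comp hπ
  exact .mkQ_comp_of_coprod hε ((subsingleton_ext_one_iff M T).1 (hExtM T hT) (P × R) _ hr)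

/-- Let `𝒯` be a class of modules closed under quotients and `ε : R → M` a
`𝒯`-preenvelope with `M ∈ 𝒯` and `Ext¹(M, T) = 0` for all `T ∈ 𝒯`.  If
`K = Coker(ε)`, then `Ext¹(K, T) = 0` for all `T ∈ 𝒯`. -/
theorem ext_coker_vanish {R : Type u} [Ring R] (𝒯 : Set (ModuleCat.{u} R))
    (hquot : ∀ (A B : ModuleCat.{u} R) (f : A ⟶ B),
      A ∈ 𝒯 → Function.Surjective f → B ∈ 𝒯)
    (M : ModuleCat.{u} R) (hM : M ∈ 𝒯) (ε : ModuleCat.of R R ⟶ M)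
    (hpre : ∀ T ∈ 𝒯, ∀ f : ModuleCat.of R R ⟶ T, ∃ g : M ⟶ T, ε ≫ g = f)
    (hExtM : ∀ T ∈ 𝒯,
      Subsingleton (((Ext ℤ (ModuleCat.{u} R) 1).obj (op M)).obj T)) :
    ∀ T ∈ 𝒯,
      Subsingleton (((Ext ℤ (ModuleCat.{u} R) 1).obj
        (op (ModuleCat.of R (↥M ⧸ LinearMap.range ε.hom)))).obj T) :=
  ext_coker_vanish_general 𝒯 M ε hpre hExtM
end
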